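/- Let (μ, (f_i)) and (μ', (f_i')) be two nonnegative monic systems (all f_i, f_i' ≥ 0) on K_N. If μ and μ' are mutually absolutely continuous and h = √(dμ'/dμ), then f_i'·h = f_i·(h∘σ) holds μ-a.e. for every i ∈ Z_N; consequently the two associated representations of the Cuntz algebra are unitarily equivalent. -/

import Mathlib

/-!
Write `μ' = h² μ`. Since `σ ∘ σᵢ = id`, the measure `μ' ∘ σᵢ⁻¹` has density `h² f'ᵢ²` with respect
to `μ` (through `μ'`) and also density `fᵢ² (h ∘ σ)²` (through `μ ∘ σᵢ⁻¹`); uniqueness of densities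
and nonnegativity give `f'ᵢ h = fᵢ (h ∘ σ)` `μ`-a.e. As `μ ≪ μ'` forces `h ≠ 0` `μ`-a.e.,
multiplication by `h` is a unitary `L²(μ') → L²(μ)`, and the identity above says precisely that it
intertwines `S'ᵢ` with `Sᵢ`. Composition with `σ` is well defined on `μ`-classes because `σ` is
`μ`-nonsingular: if `μ s = 0` then `(μ ∘ σᵢ⁻¹)(σ⁻¹ s) = μ s = 0`, and `fᵢ > 0` on the cylinder `[i]`
turns this into `μ (σ⁻¹ s ∩ [i]) = 0`.
-/

open MeasureTheory ENNReal

noncomputable section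

abbrev Word (N : ℕ) := ℕ → Fin N

/-- The left shift `σ` deleting the first letter. -/
def shift {N : ℕ} (ω : Word N) : Word N := fun n => ω (n + 1)

/-- The map `σ_i` prepending the letter `i`. -/
def prepend {N : ℕ} (i : Fin N) (ω : Word N) : Word N :=
  fun n => match n with
  | 0 => i
  | n + 1 => ω n

/-- The cylinder set determined by a finite word. -/
def cyl {N : ℕ} (w : List (Fin N)) : Set (Word N) :=
  {ω | ∀ k : Fin w.length, ω k = w.get k}

open Function

lemma ENNReal.mul_eq_mul_of_ofReal_sq_mul_eq {a b c d : ℝ} (hab : 0 ≤ a * b) (hcd : 0 ≤ c * d)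
    (h : ENNReal.ofReal (a ^ 2) * ENNReal.ofReal (b ^ 2) =
      ENNReal.ofReal (c ^ 2) * ENNReal.ofReal (d ^ 2)) : a * b = c * d := by
  rwa [← ENNReal.ofReal_mul (sq_nonneg _), ← ENNReal.ofReal_mul (sq_nonneg _), ← mul_pow,
    ← mul_pow, ENNReal.ofReal_eq_ofReal_iff (sq_nonneg _) (sq_nonneg _),
    pow_left_inj₀ hab hcd two_ne_zero] at h

lemma Complex.enorm_ofReal_mul_rpow_two (r : ℝ) (z : ℂ) :
    ‖(r : ℂ) * z‖ₑ ^ (2 : ℝ) = ENNReal.ofReal (r ^ 2) * ‖z‖ₑ ^ (2 : ℝ) := by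
  rw [enorm_mul, ENNReal.mul_rpow_of_nonneg _ _ zero_le_two, ← ofReal_norm, Complex.norm_real,
    Real.norm_eq_abs, ENNReal.ofReal_rpow_of_nonneg (abs_nonneg r) zero_le_two]
  norm_num

namespace MeasureTheory

variable {α : Type*} [MeasurableSpace α] {μ ν : Measure α}

lemma Measure.eq_withDensity_of_rnDeriv_ae_eq [SFinite ν] [SigmaFinite μ] (hνμ : ν ≪ μ)
    {ρ : α → ℝ≥0∞} (hρ : ν.rnDeriv μ =ᵐ[μ] ρ) : ν = μ.withDensity ρ :=
  (Measure.withDensity_rnDeriv_eq ν μ hνμ).symm.trans (withDensity_congr_ae hρ)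

lemma measure_eq_zero_of_withDensity_apply_eq_zero {F : α → ℝ≥0∞} (hF : AEMeasurable F μ)
    {s : Set α} (hs : μ.withDensity F s = 0) (hpos : ∀ᵐ x ∂μ, x ∈ s → F x ≠ 0) : μ s = 0 :=
  measure_mono_null_ae (hpos.mono fun _ hx hxs => ⟨hx hxs, hxs⟩)
    ((withDensity_apply_eq_zero' hF).1 hs)

lemma ae_ne_zero_of_absolutelyContinuous_withDensity {F : α → ℝ≥0∞} (hF : AEMeasurable F μ)
    (hμ : μ ≪ μ.withDensity F) : ∀ᵐ x ∂μ, F x ≠ 0 := by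
  refine hμ.ae_le (ae_iff.2 ?_)
  rw [withDensity_apply_eq_zero' hF]
  simp [← Set.ofPred_and]

lemma map_withDensity_of_leftInverse {β : Type*} [MeasurableSpace β] {φ : α → β} {T : β → α}
    (hφ : Measurable φ) (hT : Measurable T) (hTφ : LeftInverse T φ) {H : α → ℝ≥0∞}
    (hH : Measurable H) : (μ.withDensity H).map φ = (μ.map φ).withDensity (H ∘ T) := by
  ext s hs
  rw [Measure.map_apply hφ hs, withDensity_apply _ (hφ hs), withDensity_apply _ hs,
    setLIntegral_map hs (hH.comp hT) hφ]
  simp only [comp_apply, hTφ _]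

lemma mul_ae_eq_mul_comp_of_map_eq_withDensity [SigmaFinite μ] {φ T : α → α} (hφ : Measurable φ)
    (hT : Measurable T) (hTφ : LeftInverse T φ) {H F F' : α → ℝ≥0∞} (hH : Measurable H)
    (hFm : AEMeasurable F μ) (hF'm : AEMeasurable F' μ) (hF : μ.map φ = μ.withDensity F)
    (hF' : (μ.withDensity H).map φ = (μ.withDensity H).withDensity F') :
    H * F' =ᵐ[μ] F * (H ∘ T) := by
  rw [← withDensity_eq_iff_of_sigmaFinite (hH.aemeasurable.mul hF'm)
      (hFm.mul (hH.comp hT).aemeasurable), withDensity_mul₀ hH.aemeasurable hF'm,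
    withDensity_mul₀ hFm (hH.comp hT).aemeasurable, ← hF', ← hF,
    map_withDensity_of_leftInverse hφ hT hTφ hH]

section MulIsometry

variable {h : α → ℝ}

lemma eLpNorm_mul_eq_eLpNorm_withDensity (hh : Measurable h) {g : α → ℂ}
    (hg : AEStronglyMeasurable g (μ.withDensity fun x => ENNReal.ofReal (h x ^ 2))) :
    eLpNorm (fun x => (h x : ℂ) * g x) 2 μ =
      eLpNorm g 2 (μ.withDensity fun x => ENNReal.ofReal (h x ^ 2)) := by
  simp only [eLpNorm_eq_lintegral_rpow_enorm_toReal two_ne_zero ENNReal.ofNat_ne_top,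
    ENNReal.toReal_ofNat, Complex.enorm_ofReal_mul_rpow_two]
  rw [lintegral_withDensity_eq_lintegral_mul₀' (hh.pow_const 2).ennreal_ofReal.aemeasurable
    (hg.enorm.pow_const _)]
  rfl

lemma memLp_mul_of_memLp_withDensity (hh : Measurable h)
    (hμ : μ ≪ μ.withDensity fun x => ENNReal.ofReal (h x ^ 2)) {g : α → ℂ}
    (hg : MemLp g 2 (μ.withDensity fun x => ENNReal.ofReal (h x ^ 2))) :
    MemLp (fun x => (h x : ℂ) * g x) 2 μ :=
  ⟨(Complex.measurable_ofReal.comp hh).aestronglyMeasurable.mul (hg.1.mono_ac hμ),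
    (eLpNorm_mul_eq_eLpNorm_withDensity hh hg.1).trans_lt hg.2⟩

variable (μ) in
def withDensitySqMulLI (hh : Measurable h)
    (hμ : μ ≪ μ.withDensity fun x => ENNReal.ofReal (h x ^ 2)) :
    Lp ℂ 2 (μ.withDensity fun x => ENNReal.ofReal (h x ^ 2)) →ₗᵢ[ℂ] Lp ℂ 2 μ where
  toFun g := (memLp_mul_of_memLp_withDensity hh hμ (Lp.memLp g)).toLp _
  map_add' g₁ g₂ := by
    have hm g := memLp_mul_of_memLp_withDensity hh hμ (Lp.memLp g)
    ext1
    filter_upwards [(hm (g₁ + g₂)).coeFn_toLp, (hm g₁).coeFn_toLp, (hm g₂).coeFn_toLp,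
      Lp.coeFn_add ((hm g₁).toLp _) ((hm g₂).toLp _), hμ.ae_le (Lp.coeFn_add g₁ g₂)]
      with x h₁₂ h₁ h₂ hadd hadd'
    rw [h₁₂, hadd, Pi.add_apply, h₁, h₂, hadd', Pi.add_apply, mul_add]
  map_smul' c g := by
    have hm g := memLp_mul_of_memLp_withDensity hh hμ (Lp.memLp g)
    ext1
    filter_upwards [(hm (c • g)).coeFn_toLp, (hm g).coeFn_toLp,
      Lp.coeFn_smul c ((hm g).toLp _), hμ.ae_le (Lp.coeFn_smul c g)] with x hcg hg hsmul hsmul'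
    rw [hcg, RingHom.id_apply, hsmul, Pi.smul_apply, hg, hsmul', Pi.smul_apply, smul_eq_mul,
      smul_eq_mul, mul_left_comm]
  norm_map' g := by
    rw [LinearMap.coe_mk, AddHom.coe_mk, Lp.norm_toLp,
      eLpNorm_mul_eq_eLpNorm_withDensity hh (Lp.memLp g).1, Lp.norm_def]

lemma coeFn_withDensitySqMulLI (hh : Measurable h)
    (hμ : μ ≪ μ.withDensity fun x => ENNReal.ofReal (h x ^ 2))
    (g : Lp ℂ 2 (μ.withDensity fun x => ENNReal.ofReal (h x ^ 2))) :
    ⇑(withDensitySqMulLI μ hh hμ g) =ᵐ[μ] fun x => (h x : ℂ) * g x :=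
  (memLp_mul_of_memLp_withDensity hh hμ (Lp.memLp g)).coeFn_toLp

lemma withDensitySqMulLI_surjective (hh : Measurable h)
    (hμ : μ ≪ μ.withDensity fun x => ENNReal.ofReal (h x ^ 2)) :
    Surjective (withDensitySqMulLI μ hh hμ) := by
  intro u
  have hne : ∀ᵐ x ∂μ, (h x : ℂ) ≠ 0 := by
    filter_upwards [ae_ne_zero_of_absolutelyContinuous_withDensity
      (hh.pow_const 2).ennreal_ofReal.aemeasurable hμ] with x hx
    simpa using hx
  have hcancel : (fun x => (h x : ℂ) * ((h x : ℂ)⁻¹ * u x)) =ᵐ[μ] u := by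
    filter_upwards [hne] with x hx
    rw [mul_inv_cancel_left₀ hx]
  have hmeas : AEStronglyMeasurable (fun x => (h x : ℂ)⁻¹ * u x)
      (μ.withDensity fun x => ENNReal.ofReal (h x ^ 2)) :=
    (Complex.measurable_ofReal.comp hh).inv.aestronglyMeasurable.mul
      ((Lp.aestronglyMeasurable u).mono_ac (withDensity_absolutelyContinuous _ _))
  have hmem : MemLp (fun x => (h x : ℂ)⁻¹ * u x) 2
      (μ.withDensity fun x => ENNReal.ofReal (h x ^ 2)) :=
    ⟨hmeas, by
      rw [← eLpNorm_mul_eq_eLpNorm_withDensity hh hmeas, eLpNorm_congr_ae hcancel]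
      exact Lp.eLpNorm_lt_top u⟩
  refine ⟨hmem.toLp _, Lp.ext ?_⟩
  filter_upwards [coeFn_withDensitySqMulLI hh hμ (hmem.toLp _),
    hμ.ae_le hmem.coeFn_toLp, hcancel] with x hW hg hx
  rw [hW, hg, hx]

end MulIsometry

lemma Lp.mul_comp_intertwine_of_cocycle {T : α → α} (hT : Measure.QuasiMeasurePreserving T μ μ)
    (hμν : μ ≪ ν) {a a' h : α → ℝ}
    (hcoc : (fun x => a' x * h x) =ᵐ[μ] fun x => a x * h (T x))
    {W : Lp ℂ 2 ν → Lp ℂ 2 μ} (hW : ∀ g, ⇑(W g) =ᵐ[μ] fun x => (h x : ℂ) * g x)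
    {S : Lp ℂ 2 μ → Lp ℂ 2 μ} (hS : ∀ u, ⇑(S u) =ᵐ[μ] fun x => (a x : ℂ) * u (T x))
    {S' : Lp ℂ 2 ν → Lp ℂ 2 ν} (hS' : ∀ g, ⇑(S' g) =ᵐ[ν] fun x => (a' x : ℂ) * g (T x))
    (g : Lp ℂ 2 ν) : S (W g) = W (S' g) := by
  ext1
  filter_upwards [hS (W g), hT.ae_eq_comp (hW g), hW (S' g), hμν.ae_le (hS' g), hcoc]
    with x hSW hWT hWS' hS'g hx
  have hx' : (a' x : ℂ) * h x = a x * h (T x) := by exact_mod_cast hx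
  simp only [comp_apply] at hWT
  rw [hSW, hWT, hWS', hS'g]
  linear_combination -g (T x) * hx'

end MeasureTheory

section Word

variable {N : ℕ}

lemma measurable_shift : Measurable (shift (N := N)) :=
  measurable_pi_lambda _ fun n => measurable_pi_apply (n + 1)

lemma measurable_prepend (i : Fin N) : Measurable (prepend i) :=
  measurable_pi_lambda _ fun n => match n with
  | 0 => measurable_const
  | n + 1 => measurable_pi_apply n

lemma leftInverse_shift_prepend (i : Fin N) : LeftInverse shift (prepend i) := fun _ => rfl

lemma quasiMeasurePreserving_shift {μ : Measure (Word N)} {F : Fin N → Word N → ℝ≥0∞}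
    (hF : ∀ i, μ.map (prepend i) = μ.withDensity (F i)) (hFm : ∀ i, AEMeasurable (F i) μ)
    (hpos : ∀ i, ∀ᵐ x ∂μ, x 0 = i → F i x ≠ 0) :
    Measure.QuasiMeasurePreserving shift μ μ := by
  refine ⟨measurable_shift, Measure.AbsolutelyContinuous.mk fun s hs hμs => ?_⟩
  rw [Measure.map_apply measurable_shift hs]
  have hcover : shift ⁻¹' s ⊆ ⋃ i, shift ⁻¹' s ∩ {x | x 0 = i} := fun x hx =>
    Set.mem_iUnion.2 ⟨x 0, hx, rfl⟩
  refine measure_mono_null hcover (measure_iUnion_null fun i => ?_)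
  have hmeas : MeasurableSet (shift ⁻¹' s ∩ {x : Word N | x 0 = i}) :=
    (measurable_shift hs).inter (measurableSet_eq_fun (measurable_pi_apply 0) measurable_const)
  refine measure_eq_zero_of_withDensity_apply_eq_zero (hFm i) ?_
    ((hpos i).mono fun x hx hxs => hx hxs.2)
  rw [← hF i, Measure.map_apply (measurable_prepend i) hmeas]
  exact measure_mono_null (fun x hx => hx.1) hμs

end Word

theorem nonneg_monicSystem_equivalent_of_equivalent_measures_general {N : ℕ}
    (μ μ' : Measure (Word N)) [IsFiniteMeasure μ] [IsFiniteMeasure μ']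
    (f f' : Fin N → Word N → ℝ)
    (hf0 : ∀ i x, 0 ≤ f i x) (hf0' : ∀ i x, 0 ≤ f' i x)
    (hac : ∀ i, μ.map (prepend i) ≪ μ) (hac' : ∀ i, μ'.map (prepend i) ≪ μ')
    (hrn : ∀ i, (μ.map (prepend i)).rnDeriv μ =ᵐ[μ]
      fun x => ENNReal.ofReal (f i x ^ 2))
    (hrn' : ∀ i, (μ'.map (prepend i)).rnDeriv μ' =ᵐ[μ']
      fun x => ENNReal.ofReal (f' i x ^ 2))
    (hne : ∀ i, ∀ᵐ x ∂μ, x 0 = i → f i x ≠ 0)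
    (heq : μ ≪ μ' ∧ μ' ≪ μ)
    (h : Word N → ℝ) (hh0 : ∀ x, 0 ≤ h x) (hhm : Measurable h)
    (hh : μ'.rnDeriv μ =ᵐ[μ] fun x => ENNReal.ofReal (h x ^ 2)) :
    (∀ i, (fun x => f' i x * h x) =ᵐ[μ] fun x => f i x * h (shift x)) ∧
      (∀ (S : Fin N → (Lp ℂ 2 μ →L[ℂ] Lp ℂ 2 μ))
        (S' : Fin N → (Lp ℂ 2 μ' →L[ℂ] Lp ℂ 2 μ')),
        (∀ i (g : Lp ℂ 2 μ), ⇑(S i g) =ᵐ[μ] fun x => (f i x : ℂ) * g (shift x)) →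
        (∀ i (g : Lp ℂ 2 μ'), ⇑(S' i g) =ᵐ[μ'] fun x => (f' i x : ℂ) * g (shift x)) →
        ∃ W : Lp ℂ 2 μ' ≃ₗᵢ[ℂ] Lp ℂ 2 μ, ∀ i g, S i (W g) = W (S' i g)) := by
  obtain ⟨hμμ', hμ'μ⟩ := heq
  have hF i : μ.map (prepend i) = μ.withDensity fun x => ENNReal.ofReal (f i x ^ 2) :=
    Measure.eq_withDensity_of_rnDeriv_ae_eq (hac i) (hrn i)
  have hF' i : μ'.map (prepend i) = μ'.withDensity fun x => ENNReal.ofReal (f' i x ^ 2) :=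
    Measure.eq_withDensity_of_rnDeriv_ae_eq (hac' i) (hrn' i)
  have hFm i : AEMeasurable (fun x => ENNReal.ofReal (f i x ^ 2)) μ :=
    (Measure.measurable_rnDeriv _ _).aemeasurable.congr (hrn i)
  have hF'm i : AEMeasurable (fun x => ENNReal.ofReal (f' i x ^ 2)) μ :=
    ((Measure.measurable_rnDeriv _ _).aemeasurable.congr (hrn' i)).mono_ac hμμ'
  obtain rfl : μ' = μ.withDensity fun x => ENNReal.ofReal (h x ^ 2) :=
    Measure.eq_withDensity_of_rnDeriv_ae_eq hμ'μ hh
  have hcoc i : (fun x => f' i x * h x) =ᵐ[μ] fun x => f i x * h (shift x) :=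
    (mul_ae_eq_mul_comp_of_map_eq_withDensity (measurable_prepend i) measurable_shift
      (leftInverse_shift_prepend i) (hhm.pow_const 2).ennreal_ofReal (hFm i) (hF'm i) (hF i)
      (hF' i)).mono fun x hx => (mul_comm _ _).trans <| ENNReal.mul_eq_mul_of_ofReal_sq_mul_eq
        (mul_nonneg (hh0 x) (hf0' i x)) (mul_nonneg (hf0 i x) (hh0 _)) hx
  refine ⟨hcoc, fun S S' hS hS' => ?_⟩
  have hshift : Measure.QuasiMeasurePreserving shift μ μ :=
    quasiMeasurePreserving_shift hF hFm fun i => (hne i).mono fun x hx hx0 => by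
      simpa using hx hx0
  exact ⟨LinearIsometryEquiv.ofSurjective _ (withDensitySqMulLI_surjective hhm hμμ'),
    fun i => Lp.mul_comp_intertwine_of_cocycle hshift hμμ' (hcoc i)
      (coeFn_withDensitySqMulLI hhm hμμ') (hS i) (hS' i)⟩

theorem nonneg_monicSystem_equivalent_of_equivalent_measures {N : ℕ} (hN : 2 ≤ N)
    (μ μ' : Measure (Word N)) [IsFiniteMeasure μ] [IsFiniteMeasure μ']
    (f f' : Fin N → Word N → ℝ)
    (hf0 : ∀ i x, 0 ≤ f i x) (hf0' : ∀ i x, 0 ≤ f' i x)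
    (hf2 : ∀ i, MemLp (f i) 2 μ) (hf2' : ∀ i, MemLp (f' i) 2 μ')
    (hac : ∀ i, μ.map (prepend i) ≪ μ) (hac' : ∀ i, μ'.map (prepend i) ≪ μ')
    (hrn : ∀ i, (μ.map (prepend i)).rnDeriv μ =ᵐ[μ]
      fun x => ENNReal.ofReal (f i x ^ 2))
    (hrn' : ∀ i, (μ'.map (prepend i)).rnDeriv μ' =ᵐ[μ']
      fun x => ENNReal.ofReal (f' i x ^ 2))
    (hne : ∀ i, ∀ᵐ x ∂μ, x 0 = i → f i x ≠ 0)
    (hne' : ∀ i, ∀ᵐ x ∂μ', x 0 = i → f' i x ≠ 0)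
    (heq : μ ≪ μ' ∧ μ' ≪ μ)
    (h : Word N → ℝ) (hh0 : ∀ x, 0 ≤ h x) (hhm : Measurable h)
    (hh : μ'.rnDeriv μ =ᵐ[μ] fun x => ENNReal.ofReal (h x ^ 2)) :
    (∀ i, (fun x => f' i x * h x) =ᵐ[μ] fun x => f i x * h (shift x)) ∧
      (∀ (S : Fin N → (Lp ℂ 2 μ →L[ℂ] Lp ℂ 2 μ))
        (S' : Fin N → (Lp ℂ 2 μ' →L[ℂ] Lp ℂ 2 μ')),
        (∀ i (g : Lp ℂ 2 μ), ⇑(S i g) =ᵐ[μ] fun x => (f i x : ℂ) * g (shift x)) →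
        (∀ i (g : Lp ℂ 2 μ'), ⇑(S' i g) =ᵐ[μ'] fun x => (f' i x : ℂ) * g (shift x)) →
        ∃ W : Lp ℂ 2 μ' ≃ₗᵢ[ℂ] Lp ℂ 2 μ, ∀ i g, S i (W g) = W (S' i g)) :=
  nonneg_monicSystem_equivalent_of_equivalent_measures_general μ μ' f f' hf0 hf0' hac hac' hrn hrn'
    hne heq h hh0 hhm hh
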